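/- arXiv:2111.00215 — 2 statements merged into one kernel-verified Lean document; each statement's English description precedes it below -/
import Mathlib

section
/- Let a be a continuous activation function, M ∈ ℕ, h₁,…,h_M ∈ ℝ, and let θ₁,…,θ_M be FNNs all having the same layer-dimension vector. Then there exists an FNN ψ such that (R_a ψ)(x) = Σ_{m=1}^M h_m (R_a θ_m)(x) for all x ∈ ℝ^{I(θ₁)}, and the number of parameters satisfies P(ψ) ≤ M² P(θ₁). -/
noncomputable section

open Finset

/-- Partial sums used as offsets for block constructions. -/
def offset (f : ℕ → ℕ) (m : ℕ) : ℕ := ∑ t ∈ Finset.range m, f t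

/-- Concatenation of a family of vectors (given as functions `ℕ → ℝ`) along block offsets. -/
def concatV (u : ℕ) (sizes : ℕ → ℕ) (x : ℕ → ℕ → ℝ) : ℕ → ℝ :=
  fun i => ∑ m ∈ Finset.range u,
    if offset sizes m ≤ i ∧ i < offset sizes (m + 1) then x m (i - offset sizes m) else 0

/-- Matrix-vector multiplication, truncated to the first `n` coordinates of `x`. -/
def mulVecN (n : ℕ) (Wc : ℕ → ℕ → ℝ) (x : ℕ → ℝ) : ℕ → ℝ :=
  fun i => ∑ j ∈ Finset.range n, Wc i j * x j

/-- A feedforward neural network (FNN) with `depth + 1` affine layers; layer `k`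
(for `0 ≤ k ≤ depth`) maps `ℝ^{dims k}` to `ℝ^{dims (k+1)}` via the weight matrix
`W k` and the bias vector `B k`. -/
structure FNN where
  depth : ℕ
  dims : ℕ → ℕ
  W : ℕ → ℕ → ℕ → ℝ
  B : ℕ → ℕ → ℝ

namespace FNN

/-- Input dimension `I(θ)`. -/
def inp (θ : FNN) : ℕ := θ.dims 0

/-- Output dimension `O(θ)`. -/
def out (θ : FNN) : ℕ := θ.dims (θ.depth + 1)

/-- Number of parameters `P(θ) = Σ_{k=1}^{L} l_k (l_{k-1} + 1)`. -/
def params (θ : FNN) : ℕ :=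
  ∑ k ∈ Finset.range (θ.depth + 1), θ.dims (k + 1) * (θ.dims k + 1)

/-- The layer-dimension vector `(l₀, l₁, …, l_L)` of `θ`. -/
def arch (θ : FNN) : List ℕ := (List.range (θ.depth + 2)).map θ.dims

/-- The affine map of layer `k`. -/
def affine (θ : FNN) (k : ℕ) (x : ℕ → ℝ) : ℕ → ℝ :=
  fun i => (∑ j ∈ Finset.range (θ.dims k), θ.W k i j * x j) + θ.B k i

/-- The result of applying the first `k` activated layers to the input. -/
def hidden (a : ℝ → ℝ) (θ : FNN) : ℕ → (ℕ → ℝ) → ℕ → ℝ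
  | 0 => fun x => x
  | k + 1 => fun x i => a (affine θ k (hidden a θ k x) i)

/-- The realization `R_a θ` of the FNN `θ` with activation `a`: all layers but the
last one are composed with the componentwise activation. -/
def realize (a : ℝ → ℝ) (θ : FNN) (x : ℕ → ℝ) : ℕ → ℝ :=
  affine θ θ.depth (hidden a θ θ.depth x)

/-- The standard composition `θ₂ • θ₁` of two FNNs: the last affine map of `θ₁` is
merged with the first affine map of `θ₂`. -/
def comp (θ₂ θ₁ : FNN) : FNN where
  depth := θ₁.depth + θ₂.depth
  dims := fun k => if k ≤ θ₁.depth then θ₁.dims k else θ₂.dims (k - θ₁.depth)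
  W := fun k i j =>
    if k < θ₁.depth then θ₁.W k i j
    else if k = θ₁.depth then
      ∑ r ∈ Finset.range (θ₂.dims 0), θ₂.W 0 i r * θ₁.W θ₁.depth r j
    else θ₂.W (k - θ₁.depth) i j
  B := fun k i =>
    if k < θ₁.depth then θ₁.B k i
    else if k = θ₁.depth then
      (∑ r ∈ Finset.range (θ₂.dims 0), θ₂.W 0 i r * θ₁.B θ₁.depth r) + θ₂.B 0 i
    else θ₂.B (k - θ₁.depth) i

/-- Parallelization `P_u(θ₀, …, θ_{u-1})` of FNNs of equal depth: block-diagonal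
weight matrices and concatenated bias vectors. -/
def parallel (u : ℕ) (θ : ℕ → FNN) : FNN where
  depth := (θ 0).depth
  dims := fun k => ∑ m ∈ Finset.range u, (θ m).dims k
  W := fun k i j =>
    ∑ m ∈ Finset.range u,
      if offset (fun t => (θ t).dims (k + 1)) m ≤ i ∧
         i < offset (fun t => (θ t).dims (k + 1)) (m + 1) ∧
         offset (fun t => (θ t).dims k) m ≤ j ∧
         j < offset (fun t => (θ t).dims k) (m + 1) then
        (θ m).W k (i - offset (fun t => (θ t).dims (k + 1)) m)
          (j - offset (fun t => (θ t).dims k) m)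
      else 0
  B := fun k i =>
    ∑ m ∈ Finset.range u,
      if offset (fun t => (θ t).dims (k + 1)) m ≤ i ∧
         i < offset (fun t => (θ t).dims (k + 1)) (m + 1) then
        (θ m).B k (i - offset (fun t => (θ t).dims (k + 1)) m)
      else 0

/-- `𝒲 ⊛ θ`: replace the last layer `(W_L, B_L)` of `θ` by `(𝒲 W_L, 𝒲 B_L)`,
where `𝒲 ∈ ℝ^{m × O(θ)}`. -/
def matMulLeft (θ : FNN) (m : ℕ) (Wc : ℕ → ℕ → ℝ) : FNN where
  depth := θ.depth
  dims := fun k => if k = θ.depth + 1 then m else θ.dims k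
  W := fun k i j =>
    if k = θ.depth then ∑ r ∈ Finset.range θ.out, Wc i r * θ.W k r j else θ.W k i j
  B := fun k i =>
    if k = θ.depth then ∑ r ∈ Finset.range θ.out, Wc i r * θ.B k r else θ.B k i

/-- `θ ⊛ 𝕎`: replace the first layer `(W₁, B₁)` of `θ` by `(W₁ 𝕎, B₁)`,
where `𝕎 ∈ ℝ^{I(θ) × n}`. -/
def matMulRight (θ : FNN) (n : ℕ) (Wc : ℕ → ℕ → ℝ) : FNN where
  depth := θ.depth
  dims := fun k => if k = 0 then n else θ.dims k
  W := fun k i j =>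
    if k = 0 then ∑ r ∈ Finset.range (θ.dims 0), θ.W 0 i r * Wc r j else θ.W k i j
  B := θ.B

/-- Scale the last affine layer of `θ` by `c` and add the vector `v` to the last bias:
`θ' = ((W₁,B₁),…,(W_{L−1},B_{L−1}),(c W_L, c B_L + v))`. -/
def scaleShift (θ : FNN) (c : ℝ) (v : ℕ → ℝ) : FNN where
  depth := θ.depth
  dims := θ.dims
  W := fun k i j => if k = θ.depth then c * θ.W k i j else θ.W k i j
  B := fun k i => if k = θ.depth then c * θ.B k i + v i else θ.B k i

end FNN

/-- A residual neural network (ResNet): a sequence of `n` residual blocks, each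
consisting of an FNN `blocks i` together with a shortcut matrix `Γ i`. -/
structure ResNet where
  n : ℕ
  blocks : ℕ → FNN
  Γ : ℕ → ℕ → ℕ → ℝ

namespace ResNet

/-- The intermediate states `x_i = Γ_i x_{i−1} + (R_a θ_i)(x_{i−1})` of the
realization of a ResNet. -/
def state (a : ℝ → ℝ) (Θ : ResNet) (x : ℕ → ℝ) : ℕ → ℕ → ℝ
  | 0 => x
  | i + 1 => fun r =>
      mulVecN (Θ.blocks i).inp (Θ.Γ i) (state a Θ x i) r +
        FNN.realize a (Θ.blocks i) (state a Θ x i) r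

/-- The realization `𝓡_a Θ` of a ResNet. -/
def realize (a : ℝ → ℝ) (Θ : ResNet) (x : ℕ → ℝ) : ℕ → ℝ := state a Θ x Θ.n

/-- The complexity `𝓟(Θ) = Σ_i (P(θ_i) + d_i d_{i−1})` of a ResNet. -/
def complexity (Θ : ResNet) : ℕ :=
  ∑ i ∈ Finset.range Θ.n, ((Θ.blocks i).params + (Θ.blocks i).out * (Θ.blocks i).inp)

/-- The composition `Θ² • Θ¹` of two ResNets: concatenation of the blocks. -/
def comp (Θ₂ Θ₁ : ResNet) : ResNet where
  n := Θ₁.n + Θ₂.n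
  blocks := fun k => if k < Θ₁.n then Θ₁.blocks k else Θ₂.blocks (k - Θ₁.n)
  Γ := fun k => if k < Θ₁.n then Θ₁.Γ k else Θ₂.Γ (k - Θ₁.n)

/-- The composition `φ ◇ Θ` of a ResNet `Θ` with an FNN `φ`: append `φ` as a final
residual block whose shortcut matrix is zero. -/
def appendFNN (Θ : ResNet) (φ : FNN) : ResNet where
  n := Θ.n + 1
  blocks := fun k => if k < Θ.n then Θ.blocks k else φ
  Γ := fun k => if k < Θ.n then Θ.Γ k else fun _ _ => 0

/-- The parallelization `ℙ_u(Θ⁰, …, Θ^{u-1})` of ResNets with identical architectures: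
block-diagonal shortcut matrices and parallelized residual blocks. -/
def parallel (u : ℕ) (Θ : ℕ → ResNet) : ResNet where
  n := (Θ 0).n
  blocks := fun i => FNN.parallel u (fun j => (Θ j).blocks i)
  Γ := fun i r s =>
    ∑ m ∈ Finset.range u,
      if offset (fun t => ((Θ t).blocks i).out) m ≤ r ∧
         r < offset (fun t => ((Θ t).blocks i).out) (m + 1) ∧
         offset (fun t => ((Θ t).blocks i).inp) m ≤ s ∧
         s < offset (fun t => ((Θ t).blocks i).inp) (m + 1) then
        (Θ m).Γ i (r - offset (fun t => ((Θ t).blocks i).out) m)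
          (s - offset (fun t => ((Θ t).blocks i).inp) m)
      else 0

end ResNet

/-- The perturbed Euler–Maruyama sequence `y₀ = x`, `y_{i+1} = y_i + c_i Φ(y_i) + v_i`,
where `Φ = R_a φ`. -/
def emSeq (a : ℝ → ℝ) (φ : FNN) (c : ℕ → ℝ) (v : ℕ → ℕ → ℝ) (x : ℕ → ℝ) : ℕ → ℕ → ℝ
  | 0 => x
  | i + 1 => fun r =>
      emSeq a φ c v x i r + c i * FNN.realize a φ (emSeq a φ c v x i) r + v i r

/-- The Euler–Maruyama-type ResNet `ψ = (I_d, φ₁, …, I_d, φ_N)` with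
`N = ⌊T/δ²⌋ + 1`, identity shortcut matrices, blocks `φ_i` obtained from `φ` by
scaling the last layer by the stepsize `δ²` (respectively `T − δ²⌊T/δ²⌋` for the
last block) and adding `v i` to the last bias. -/
def eulerResNet (φ : FNN) (δ T : ℝ) (v : ℕ → ℕ → ℝ) : ResNet where
  n := Nat.floor (T / δ ^ 2) + 1
  blocks := fun i =>
    FNN.scaleShift φ
      (if i + 1 < Nat.floor (T / δ ^ 2) + 1 then δ ^ 2
       else T - δ ^ 2 * (Nat.floor (T / δ ^ 2) : ℝ)) (v i)
  Γ := fun _ r s => if r = s then 1 else 0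

/-- Embedding of `ℝ^d` into `ℕ → ℝ` by padding with zeros. -/
def embed (d : ℕ) (x : Fin d → ℝ) : ℕ → ℝ :=
  fun i => if h : i < d then x ⟨i, h⟩ else 0


/-- Auxiliary: div/mod facts for block indices. -/
lemma divmod_block {m d r : ℕ} (hr : r < d) : (m * d + r) / d = m ∧ (m * d + r) % d = r := by
  constructor
  · rw [add_comm, Nat.add_mul_div_right _ _ (Nat.pos_of_ne_zero (by omega)),
      Nat.div_eq_of_lt hr, zero_add]
  · rw [add_comm, Nat.add_mul_mod_self_right, Nat.mod_eq_of_lt hr]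

/-- Auxiliary: splitting a sum over `range (M * n)` into blocks. -/
lemma sum_range_mul {β : Type*} [AddCommMonoid β] (M n : ℕ) (f : ℕ → β) :
    ∑ j ∈ Finset.range (M * n), f j
      = ∑ m ∈ Finset.range M, ∑ r ∈ Finset.range n, f (m * n + r) := by
  induction M with
  | zero => simp
  | succ M ih =>
    rw [Finset.sum_range_succ, ← ih, Nat.succ_mul, Finset.sum_range_add]

/-- Sum network for depth-0 FNNs. -/
def sumNet0 (M : ℕ) (h : ℕ → ℝ) (θ : ℕ → FNN) : FNN where
  depth := 0
  dims := (θ 0).dims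
  W := fun _ i j => ∑ m ∈ Finset.range M, h m * (θ m).W 0 i j
  B := fun _ i => ∑ m ∈ Finset.range M, h m * (θ m).B 0 i

/-- Sum network for FNNs of depth `≥ 1`: parallelize the hidden layers,
duplicate the input, and take the weighted sum at the output layer. -/
def sumNet1 (M : ℕ) (h : ℕ → ℝ) (θ : ℕ → FNN) : FNN where
  depth := (θ 0).depth
  dims := fun k => if k = 0 then (θ 0).dims 0
    else if k = (θ 0).depth + 1 then (θ 0).dims ((θ 0).depth + 1)
    else M * (θ 0).dims k
  W := fun k i j =>
    if k = (θ 0).depth then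
      h (j / (θ 0).dims (θ 0).depth) *
        (θ (j / (θ 0).dims (θ 0).depth)).W (θ 0).depth i (j % (θ 0).dims (θ 0).depth)
    else if k = 0 then
      (θ (i / (θ 0).dims 1)).W 0 (i % (θ 0).dims 1) j
    else if i / (θ 0).dims (k + 1) = j / (θ 0).dims k then
      (θ (i / (θ 0).dims (k + 1))).W k (i % (θ 0).dims (k + 1)) (j % (θ 0).dims k)
    else 0
  B := fun k i =>
    if k = (θ 0).depth then ∑ m ∈ Finset.range M, h m * (θ m).B (θ 0).depth i
    else (θ (i / (θ 0).dims (k + 1))).B k (i % (θ 0).dims (k + 1))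

section sumNet1Lemmas

variable (M : ℕ) (h : ℕ → ℝ) (θ : ℕ → FNN)

lemma sumNet1_depth : (sumNet1 M h θ).depth = (θ 0).depth := rfl

lemma sumNet1_dims0 : (sumNet1 M h θ).dims 0 = (θ 0).dims 0 := by
  simp [sumNet1]

lemma sumNet1_dimsL1 :
    (sumNet1 M h θ).dims ((θ 0).depth + 1) = (θ 0).dims ((θ 0).depth + 1) := by
  simp [sumNet1]

lemma sumNet1_dimsMid (k : ℕ) (hk0 : k ≠ 0) (hk1 : k ≠ (θ 0).depth + 1) :
    (sumNet1 M h θ).dims k = M * (θ 0).dims k := by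
  simp [sumNet1, hk0, hk1]

lemma sumNet1_W_first (hL : (θ 0).depth ≠ 0) (i j : ℕ) :
    (sumNet1 M h θ).W 0 i j = (θ (i / (θ 0).dims 1)).W 0 (i % (θ 0).dims 1) j := by
  simp only [sumNet1]
  rw [if_neg (fun e => hL e.symm)]
  simp

lemma sumNet1_W_mid (k : ℕ) (hk0 : k ≠ 0) (hkL : k ≠ (θ 0).depth) (i j : ℕ) :
    (sumNet1 M h θ).W k i j =
      if i / (θ 0).dims (k + 1) = j / (θ 0).dims k then
        (θ (i / (θ 0).dims (k + 1))).W k (i % (θ 0).dims (k + 1)) (j % (θ 0).dims k)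
      else 0 := by
  simp only [sumNet1]
  rw [if_neg hkL, if_neg hk0]

lemma sumNet1_W_last (i j : ℕ) :
    (sumNet1 M h θ).W (θ 0).depth i j =
      h (j / (θ 0).dims (θ 0).depth) *
        (θ (j / (θ 0).dims (θ 0).depth)).W (θ 0).depth i (j % (θ 0).dims (θ 0).depth) := by
  simp [sumNet1]

lemma sumNet1_B_mid (k : ℕ) (hkL : k ≠ (θ 0).depth) (i : ℕ) :
    (sumNet1 M h θ).B k i =
      (θ (i / (θ 0).dims (k + 1))).B k (i % (θ 0).dims (k + 1)) := by
  simp only [sumNet1]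
  rw [if_neg hkL]

lemma sumNet1_B_last (i : ℕ) :
    (sumNet1 M h θ).B (θ 0).depth i =
      ∑ m ∈ Finset.range M, h m * (θ m).B (θ 0).depth i := by
  simp [sumNet1]

end sumNet1Lemmas

/-- For FNNs `θ 0, …, θ (M-1)` with identical layer-dimension
vectors and scalars `h m`, there is an FNN `ψ` whose realization is the weighted sum
`Σ_m h_m (R_a θ_m)` and whose parameter count satisfies `P(ψ) ≤ M² P(θ 0)`. -/
theorem sum_FNN (a : ℝ → ℝ) (ha : Continuous a) (M : ℕ) (hM : 0 < M) (h : ℕ → ℝ)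
    (θ : ℕ → FNN) (harch : ∀ m < M, (θ m).arch = (θ 0).arch) :
    ∃ ψ : FNN, ψ.inp = (θ 0).inp ∧ ψ.out = (θ 0).out ∧
      (∀ x : ℕ → ℝ, ∀ i < (θ 0).out,
        FNN.realize a ψ x i = ∑ m ∈ Finset.range M, h m * FNN.realize a (θ m) x i) ∧
      ψ.params ≤ M ^ 2 * (θ 0).params := by
  classical
  have harch' : ∀ m < M, (θ m).depth = (θ 0).depth ∧
      ∀ k < (θ 0).depth + 2, (θ m).dims k = (θ 0).dims k := by
    intro m hm
    have hh := harch m hm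
    unfold FNN.arch at hh
    have hlen := congrArg List.length hh
    simp only [List.length_map, List.length_range] at hlen
    have hdep : (θ m).depth = (θ 0).depth := by omega
    refine ⟨hdep, ?_⟩
    intro k hk
    have h2 := congrArg (fun l => l[k]?) hh
    simp only [List.getElem?_map, List.getElem?_range, hdep, hk, if_pos,
      Option.map_some] at h2
    exact Option.some.inj h2
  rcases Nat.eq_zero_or_pos (θ 0).depth with hL0 | hL1
  · -- Depth 0 case.
    refine ⟨sumNet0 M h θ, rfl, ?_, ?_, ?_⟩
    · simp [FNN.out, sumNet0, hL0]
    · intro x i hi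
      have hRm : ∀ m ∈ Finset.range M, h m * FNN.realize a (θ m) x i
          = h m * ((∑ j ∈ Finset.range ((θ 0).dims 0), (θ m).W 0 i j * x j)
              + (θ m).B 0 i) := by
        intro m hm
        rcases harch' m (Finset.mem_range.1 hm) with ⟨hdep, hdims⟩
        rw [FNN.realize, hdep, hL0, FNN.affine, hdims 0 (by omega)]
        simp [FNN.hidden]
      rw [Finset.sum_congr rfl hRm]
      show FNN.affine (sumNet0 M h θ) 0 (FNN.hidden a (sumNet0 M h θ) 0 x) i = _
      simp only [FNN.affine, FNN.hidden, sumNet0, mul_add, Finset.sum_add_distrib,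
        Finset.sum_mul, Finset.mul_sum, mul_assoc]
      rw [Finset.sum_comm]
    · have heq : (sumNet0 M h θ).params = (θ 0).params := by
        simp [FNN.params, sumNet0, hL0]
      rw [heq]
      exact Nat.le_mul_of_pos_left _ (by positivity)
  · -- Depth ≥ 1 case.
    have hLne : (θ 0).depth ≠ 0 := by omega
    -- Key hidden-layer lemma.
    have hhid : ∀ k, 1 ≤ k → k ≤ (θ 0).depth → ∀ x : ℕ → ℝ, ∀ m < M,
        ∀ r < (θ 0).dims k,
        FNN.hidden a (sumNet1 M h θ) k x (m * (θ 0).dims k + r)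
          = FNN.hidden a (θ m) k x r := by
      intro k hk
      induction k, hk using Nat.le_induction with
      | base =>
        intro _ x m hm r hr
        rcases harch' m hm with ⟨hdep, hdims⟩
        rcases divmod_block hr with ⟨hdiv, hmod⟩
        show a (FNN.affine (sumNet1 M h θ) 0 x (m * (θ 0).dims 1 + r))
          = a (FNN.affine (θ m) 0 x r)
        congr 1
        rw [FNN.affine, FNN.affine, sumNet1_dims0, hdims 0 (by omega),
          sumNet1_B_mid M h θ 0 (Ne.symm hLne), hdiv, hmod]
        refine congrArg (· + (θ m).B 0 r) (Finset.sum_congr rfl fun j _ => ?_)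
        rw [sumNet1_W_first M h θ hLne, hdiv, hmod]
      | succ k hk1 ih =>
        intro hkL x m hm r hr
        rcases harch' m hm with ⟨hdep, hdims⟩
        rcases divmod_block hr with ⟨hdiv, hmod⟩
        show a (FNN.affine (sumNet1 M h θ) k (FNN.hidden a (sumNet1 M h θ) k x)
            (m * (θ 0).dims (k + 1) + r))
          = a (FNN.affine (θ m) k (FNN.hidden a (θ m) k x) r)
        congr 1
        rw [FNN.affine, FNN.affine, hdims k (by omega),
          sumNet1_dimsMid M h θ k (by omega) (by omega),
          sumNet1_B_mid M h θ k (by omega), hdiv, hmod, sum_range_mul]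
        refine congrArg (· + (θ m).B k r) ?_
        have key : ∀ m' ∈ Finset.range M, ∀ r' ∈ Finset.range ((θ 0).dims k),
            (sumNet1 M h θ).W k (m * (θ 0).dims (k + 1) + r) (m' * (θ 0).dims k + r')
              * FNN.hidden a (sumNet1 M h θ) k x (m' * (θ 0).dims k + r')
            = if m' = m then (θ m).W k r r' * FNN.hidden a (θ m) k x r' else 0 := by
          intro m' hm' r' hr'
          rw [Finset.mem_range] at hm' hr'
          rcases divmod_block hr' with ⟨hdiv', hmod'⟩
          rw [sumNet1_W_mid M h θ k (by omega) (by omega), hdiv, hmod, hdiv', hmod',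
            ih (by omega) x m' hm' r' hr']
          by_cases hmm : m' = m
          · subst hmm; rw [if_pos rfl, if_pos rfl]
          · rw [if_neg (fun e => hmm e.symm), if_neg hmm, zero_mul]
        rw [Finset.sum_congr rfl (fun m' hm' =>
          Finset.sum_congr rfl (key m' hm'))]
        calc ∑ m' ∈ Finset.range M, ∑ r' ∈ Finset.range ((θ 0).dims k),
              (if m' = m then (θ m).W k r r' * FNN.hidden a (θ m) k x r' else 0)
            = ∑ m' ∈ Finset.range M, (if m' = m then
                ∑ r' ∈ Finset.range ((θ 0).dims k),
                  (θ m).W k r r' * FNN.hidden a (θ m) k x r' else 0) := by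
              refine Finset.sum_congr rfl fun m' _ => ?_
              split_ifs <;> simp
          _ = _ := by
              rw [Finset.sum_ite_eq' (Finset.range M) m, if_pos (Finset.mem_range.2 hm)]
    refine ⟨sumNet1 M h θ, sumNet1_dims0 M h θ, ?_, ?_, ?_⟩
    · show (sumNet1 M h θ).dims ((θ 0).depth + 1) = (θ 0).dims ((θ 0).depth + 1)
      exact sumNet1_dimsL1 M h θ
    · intro x i hi
      have hRm : ∀ m ∈ Finset.range M, h m * FNN.realize a (θ m) x i
          = h m * ((∑ r ∈ Finset.range ((θ 0).dims (θ 0).depth),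
              (θ m).W (θ 0).depth i r
                * FNN.hidden a (θ m) (θ 0).depth x r) + (θ m).B (θ 0).depth i) := by
        intro m hm
        rcases harch' m (Finset.mem_range.1 hm) with ⟨hdep, hdims⟩
        rw [FNN.realize, hdep, FNN.affine, hdims (θ 0).depth (by omega)]
      rw [Finset.sum_congr rfl hRm]
      show FNN.affine (sumNet1 M h θ) (θ 0).depth
        (FNN.hidden a (sumNet1 M h θ) (θ 0).depth x) i = _
      rw [FNN.affine, sumNet1_dimsMid M h θ (θ 0).depth hLne (by omega),
        sumNet1_B_last, sum_range_mul]
      have key : ∀ m ∈ Finset.range M, ∀ r ∈ Finset.range ((θ 0).dims (θ 0).depth),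
          (sumNet1 M h θ).W (θ 0).depth i (m * (θ 0).dims (θ 0).depth + r)
            * FNN.hidden a (sumNet1 M h θ) (θ 0).depth x
              (m * (θ 0).dims (θ 0).depth + r)
          = h m * ((θ m).W (θ 0).depth i r
              * FNN.hidden a (θ m) (θ 0).depth x r) := by
        intro m hm r hr
        rw [Finset.mem_range] at hm hr
        rcases divmod_block hr with ⟨hdiv, hmod⟩
        rw [sumNet1_W_last, hdiv, hmod, hhid (θ 0).depth hL1 le_rfl x m hm r hr,
          mul_assoc]
      rw [Finset.sum_congr rfl (fun m hm => Finset.sum_congr rfl (key m hm))]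
      simp only [mul_add, Finset.sum_add_distrib, Finset.mul_sum]
    · have hle : ∀ k, (sumNet1 M h θ).dims k ≤ M * (θ 0).dims k := by
        intro k
        by_cases hk0 : k = 0
        · subst hk0; rw [sumNet1_dims0]; exact Nat.le_mul_of_pos_left _ hM
        · by_cases hk1 : k = (θ 0).depth + 1
          · subst hk1; rw [sumNet1_dimsL1]; exact Nat.le_mul_of_pos_left _ hM
          · rw [sumNet1_dimsMid M h θ k hk0 hk1]
      have hterm : ∀ k ∈ Finset.range ((θ 0).depth + 1),
          (sumNet1 M h θ).dims (k + 1) * ((sumNet1 M h θ).dims k + 1)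
            ≤ M ^ 2 * ((θ 0).dims (k + 1) * ((θ 0).dims k + 1)) := by
        intro k _
        calc (sumNet1 M h θ).dims (k + 1) * ((sumNet1 M h θ).dims k + 1)
            ≤ (M * (θ 0).dims (k + 1)) * (M * (θ 0).dims k + M) :=
              Nat.mul_le_mul (hle _) (by have := hle k; omega)
          _ = M ^ 2 * ((θ 0).dims (k + 1) * ((θ 0).dims k + 1)) := by ring
      calc (sumNet1 M h θ).params
          = ∑ k ∈ Finset.range ((θ 0).depth + 1),
              (sumNet1 M h θ).dims (k + 1) * ((sumNet1 M h θ).dims k + 1) := rfl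
        _ ≤ ∑ k ∈ Finset.range ((θ 0).depth + 1),
              M ^ 2 * ((θ 0).dims (k + 1) * ((θ 0).dims k + 1)) :=
            Finset.sum_le_sum hterm
        _ = M ^ 2 * (θ 0).params := by rw [← Finset.mul_sum]; rfl
end
end

section
/- Let a be a continuous activation function, n, u ∈ ℕ, and let Θ¹,…,Θ^u be ResNets of length n such that for each i ∈ {1,…,n} the i-th residual blocks θ_i^1,…,θ_i^u all have the same layer-dimension vector. Then the parallelized ResNet ℙ_u(Θ¹,…,Θ^u), whose i-th shortcut matrix is the block diagonal diag(Γ_i^1,…,Γ_i^u) and whose i-th residual block is the parallelization P_u(θ_i^1,…,θ_i^u), satisfies (i) [𝓡_a(ℙ_u(Θ¹,…,Θ^u))](x₀¹,…,x₀^u) = ((𝓡_aΘ¹)(x₀¹),…,(𝓡_aΘ^u)(x₀^u)) for all inputs x₀^j ∈ ℝ^{d₀}, and (ii) 𝓟(ℙ_u(Θ¹,…,Θ^u)) ≤ u² 𝓟(Θ¹). -/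
noncomputable section

open Finset

section ParallelHelpers

lemma offset_mono (f : ℕ → ℕ) : Monotone (offset f) := fun _ _ h =>
  Finset.sum_le_sum_of_subset (Finset.range_subset_range.2 h)

lemma offset_succ (f : ℕ → ℕ) (m : ℕ) : offset f (m + 1) = offset f m + f m :=
  Finset.sum_range_succ f m

lemma block_unique {f : ℕ → ℕ} {i m m' : ℕ}
    (h : offset f m ≤ i ∧ i < offset f (m + 1))
    (h' : offset f m' ≤ i ∧ i < offset f (m' + 1)) : m = m' := by
  rcases lt_trichotomy m m' with hlt | he | hgt
  · exact absurd (lt_of_lt_of_le h.2 (le_trans (offset_mono f hlt) h'.1)) (lt_irrefl i)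
  · exact he
  · exact absurd (lt_of_lt_of_le h'.2 (le_trans (offset_mono f hgt) h.1)) (lt_irrefl i)

lemma exists_block {f : ℕ → ℕ} {u i : ℕ} (h : i < offset f u) :
    ∃ m, m < u ∧ offset f m ≤ i ∧ i < offset f (m + 1) := by
  induction u with
  | zero => simp [offset] at h
  | succ v ih =>
    by_cases hi : i < offset f v
    · obtain ⟨m, hm, h1, h2⟩ := ih hi
      exact ⟨m, Nat.lt_succ_of_lt hm, h1, h2⟩
    · exact ⟨v, Nat.lt_succ_self v, Nat.le_of_not_lt hi, h⟩

lemma concatV_in {u : ℕ} {f : ℕ → ℕ} {x : ℕ → ℕ → ℝ} {m i : ℕ} (hm : m < u)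
    (h1 : offset f m ≤ i) (h2 : i < offset f (m + 1)) :
    concatV u f x i = x m (i - offset f m) := by
  unfold concatV
  rw [Finset.sum_eq_single m]
  · rw [if_pos ⟨h1, h2⟩]
  · intro b _ hbm
    rw [if_neg]
    rintro ⟨hb1, hb2⟩
    exact hbm (block_unique ⟨hb1, hb2⟩ ⟨h1, h2⟩)
  · intro hm'
    exact absurd (Finset.mem_range.2 hm) hm'

lemma concatV_out {u : ℕ} {f : ℕ → ℕ} {x : ℕ → ℕ → ℝ} {i : ℕ}
    (h : offset f u ≤ i) : concatV u f x i = 0 := by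
  unfold concatV
  apply Finset.sum_eq_zero
  intro m hm
  rw [if_neg]
  rintro ⟨_, h2⟩
  exact absurd (lt_of_lt_of_le h2 (le_trans (offset_mono f (Finset.mem_range.1 hm)) h))
    (lt_irrefl i)

lemma offset_congr {f g : ℕ → ℕ} {u : ℕ} (h : ∀ t < u, f t = g t) {m : ℕ} (hm : m ≤ u) :
    offset f m = offset g m :=
  Finset.sum_congr rfl fun t ht => h t (lt_of_lt_of_le (Finset.mem_range.1 ht) hm)

lemma concatV_congr {u : ℕ} {f g : ℕ → ℕ} {x y : ℕ → ℕ → ℝ}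
    (hfg : ∀ t < u, f t = g t) (hxy : ∀ m < u, x m = y m) :
    concatV u f x = concatV u g y := by
  funext i
  unfold concatV
  apply Finset.sum_congr rfl
  intro m hm
  have hm' := Finset.mem_range.1 hm
  rw [offset_congr hfg (le_of_lt hm'), offset_congr hfg hm', hxy m hm']

lemma concatV_add {u : ℕ} {f : ℕ → ℕ} {x y : ℕ → ℕ → ℝ} (r : ℕ) :
    concatV u f x r + concatV u f y r = concatV u f (fun m i => x m i + y m i) r := by
  unfold concatV
  rw [← Finset.sum_add_distrib]
  apply Finset.sum_congr rfl
  intro m _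
  split_ifs <;> simp

lemma sum_window {N lo c : ℕ} (h : lo + c ≤ N) (g : ℕ → ℝ) :
    (∑ s ∈ Finset.range N, if lo ≤ s ∧ s < lo + c then g (s - lo) else 0)
      = ∑ s ∈ Finset.range c, g s := by
  rw [← Finset.sum_filter]
  have he : Finset.filter (fun s => lo ≤ s ∧ s < lo + c) (Finset.range N)
      = Finset.Ico lo (lo + c) := by
    ext s
    simp only [Finset.mem_filter, Finset.mem_range, Finset.mem_Ico]
    exact ⟨fun ⟨_, h1, h2⟩ => ⟨h1, h2⟩, fun ⟨h1, h2⟩ => ⟨lt_of_lt_of_le h2 h, h1, h2⟩⟩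
  rw [he, Finset.sum_Ico_eq_sum_range]
  simp

lemma block_mulvec {u : ℕ} (R C : ℕ → ℕ) (A : ℕ → ℕ → ℕ → ℝ) (x : ℕ → ℕ → ℝ)
    (y : ℕ → ℝ) (hy : ∀ s, s < offset C u → y s = concatV u C x s) (r : ℕ) :
    (∑ s ∈ Finset.range (offset C u),
      (∑ m ∈ Finset.range u,
        if offset R m ≤ r ∧ r < offset R (m + 1) ∧ offset C m ≤ s ∧ s < offset C (m + 1)
        then A m (r - offset R m) (s - offset C m) else 0) * y s)
      = concatV u R (fun m r' => ∑ s ∈ Finset.range (C m), A m r' s * x m s) r := by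
  by_cases hr : r < offset R u
  · obtain ⟨m, hm, h1, h2⟩ := exists_block hr
    rw [concatV_in hm h1 h2]
    have step : ∀ s ∈ Finset.range (offset C u),
        (∑ m' ∈ Finset.range u,
          if offset R m' ≤ r ∧ r < offset R (m' + 1) ∧ offset C m' ≤ s ∧ s < offset C (m' + 1)
          then A m' (r - offset R m') (s - offset C m') else 0) * y s
        = (if offset C m ≤ s ∧ s < offset C m + C m
           then A m (r - offset R m) (s - offset C m) * x m (s - offset C m) else 0) := by
      intro s hs
      have hs' := Finset.mem_range.1 hs
      rw [Finset.sum_eq_single m]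
      · by_cases hc : offset C m ≤ s ∧ s < offset C (m + 1)
        · rw [if_pos ⟨h1, h2, hc.1, hc.2⟩, hy s hs', concatV_in hm hc.1 hc.2,
            if_pos ⟨hc.1, offset_succ C m ▸ hc.2⟩]
        · rw [if_neg (fun hh => hc ⟨hh.2.2.1, hh.2.2.2⟩), zero_mul,
            if_neg (fun hh => hc ⟨hh.1, by rw [offset_succ]; exact hh.2⟩)]
      · intro b _ hbm
        rw [if_neg]
        rintro ⟨b1, b2, _⟩
        exact hbm (block_unique ⟨b1, b2⟩ ⟨h1, h2⟩)
      · intro h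
        exact absurd (Finset.mem_range.2 hm) h
    rw [Finset.sum_congr rfl step]
    exact sum_window (N := offset C u) (lo := offset C m) (c := C m)
      (le_trans (le_of_eq (offset_succ C m).symm) (offset_mono C hm))
      (fun t => A m (r - offset R m) t * x m t)
  · rw [concatV_out (Nat.le_of_not_lt hr)]
    apply Finset.sum_eq_zero
    intro s _
    rw [Finset.sum_eq_zero, zero_mul]
    intro b hb
    rw [if_neg]
    rintro ⟨_, b2, _⟩
    exact hr (lt_of_lt_of_le b2 (offset_mono R (Finset.mem_range.1 hb)))

lemma parallel_affine (u : ℕ) (θ : ℕ → FNN) (k : ℕ) (y : ℕ → ℝ) (z : ℕ → ℕ → ℝ)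
    (hy : ∀ s, s < offset (fun t => (θ t).dims k) u →
      y s = concatV u (fun t => (θ t).dims k) z s) (r : ℕ) :
    FNN.affine (FNN.parallel u θ) k y r
      = concatV u (fun t => (θ t).dims (k + 1)) (fun j => FNN.affine (θ j) k (z j)) r := by
  have hW : FNN.affine (FNN.parallel u θ) k y r =
      (∑ s ∈ Finset.range (offset (fun t => (θ t).dims k) u),
        (∑ m ∈ Finset.range u,
          if offset (fun t => (θ t).dims (k + 1)) m ≤ r ∧
             r < offset (fun t => (θ t).dims (k + 1)) (m + 1) ∧
             offset (fun t => (θ t).dims k) m ≤ s ∧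
             s < offset (fun t => (θ t).dims k) (m + 1)
          then (θ m).W k (r - offset (fun t => (θ t).dims (k + 1)) m)
            (s - offset (fun t => (θ t).dims k) m) else 0) * y s)
      + concatV u (fun t => (θ t).dims (k + 1)) (fun m => (θ m).B k) r := rfl
  rw [hW, block_mulvec (fun t => (θ t).dims (k + 1)) (fun t => (θ t).dims k)
    (fun m => (θ m).W k) z y hy r, concatV_add]
  rfl

lemma parallel_hidden (a : ℝ → ℝ) (u : ℕ) (θ : ℕ → FNN) (x : ℕ → ℕ → ℝ) (k : ℕ) :
    ∀ i, i < offset (fun t => (θ t).dims k) u →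
      FNN.hidden a (FNN.parallel u θ) k (concatV u (fun t => (θ t).dims 0) x) i
        = concatV u (fun t => (θ t).dims k) (fun j => FNN.hidden a (θ j) k (x j)) i := by
  induction k with
  | zero => intro i _; rfl
  | succ k ih =>
    intro i hi
    obtain ⟨m, hm, h1, h2⟩ := exists_block hi
    show a (FNN.affine (FNN.parallel u θ) k
      (FNN.hidden a (FNN.parallel u θ) k (concatV u (fun t => (θ t).dims 0) x)) i) = _
    rw [parallel_affine u θ k _ (fun j => FNN.hidden a (θ j) k (x j)) (fun s hs => ih s hs) i,
      concatV_in hm h1 h2, concatV_in hm h1 h2]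
    rfl

lemma parallel_realize (a : ℝ → ℝ) (u : ℕ) (θ : ℕ → FNN)
    (hd : ∀ j < u, (θ j).depth = (θ 0).depth) (x : ℕ → ℕ → ℝ) :
    FNN.realize a (FNN.parallel u θ) (concatV u (fun t => (θ t).inp) x)
      = concatV u (fun t => (θ t).out) (fun j => FNN.realize a (θ j) (x j)) := by
  funext r
  have h1 : FNN.realize a (FNN.parallel u θ) (concatV u (fun t => (θ t).inp) x) r
      = FNN.affine (FNN.parallel u θ) ((θ 0).depth)
          (FNN.hidden a (FNN.parallel u θ) ((θ 0).depth)
            (concatV u (fun t => (θ t).dims 0) x)) r := rfl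
  rw [h1, parallel_affine u θ ((θ 0).depth) _
      (fun j => FNN.hidden a (θ j) ((θ 0).depth) (x j))
      (fun s hs => parallel_hidden a u θ x ((θ 0).depth) s hs) r]
  have h2 : concatV u (fun t => (θ t).dims ((θ 0).depth + 1))
        (fun j => FNN.affine (θ j) ((θ 0).depth)
          (FNN.hidden a (θ j) ((θ 0).depth) (x j)))
      = concatV u (fun t => (θ t).out) (fun j => FNN.realize a (θ j) (x j)) := by
    apply concatV_congr
    · intro t ht
      show (θ t).dims ((θ 0).depth + 1) = (θ t).dims ((θ t).depth + 1)
      rw [hd t ht]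
    · intro m hm
      show FNN.affine (θ m) ((θ 0).depth) (FNN.hidden a (θ m) ((θ 0).depth) (x m))
        = FNN.affine (θ m) ((θ m).depth) (FNN.hidden a (θ m) ((θ m).depth) (x m))
      rw [hd m hm]
  rw [h2]

lemma arch_depth_eq {θ θ' : FNN} (h : θ.arch = θ'.arch) : θ.depth = θ'.depth := by
  have := congrArg List.length h
  simp only [FNN.arch, List.length_map, List.length_range] at this
  omega

lemma arch_dims_eq {θ θ' : FNN} (h : θ.arch = θ'.arch) {k : ℕ} (hk : k ≤ θ.depth + 1) :
    θ.dims k = θ'.dims k := by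
  have hd := arch_depth_eq h
  have h1 : θ.arch[k]? = θ'.arch[k]? := by rw [h]
  simp only [FNN.arch, List.getElem?_map] at h1
  rw [List.getElem?_range (by omega), List.getElem?_range (by omega)] at h1
  simpa using h1

end ParallelHelpers

/-- For ResNets `Θ 0, …, Θ (u-1)` of equal length whose `i`-th
residual blocks all have the same layer-dimension vector, the parallelization
`ℙ_u(Θ)` maps the concatenated inputs to the concatenation of the individual
realizations, and `𝓟(ℙ_u(Θ)) ≤ u² 𝓟(Θ 0)`. -/
theorem resnet_parallel (a : ℝ → ℝ) (ha : Continuous a) (u : ℕ) (hu : 0 < u)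
    (Θ : ℕ → ResNet) (hn0 : 0 < (Θ 0).n)
    (hlen : ∀ j < u, (Θ j).n = (Θ 0).n)
    (harch : ∀ j < u, ∀ i < (Θ 0).n, ((Θ j).blocks i).arch = ((Θ 0).blocks i).arch)
    (hchain : ∀ j < u, ∀ i : ℕ, i + 1 < (Θ j).n →
        ((Θ j).blocks (i + 1)).inp = ((Θ j).blocks i).out) :
    (∀ x : ℕ → ℕ → ℝ,
        ResNet.realize a (ResNet.parallel u Θ)
            (concatV u (fun j => ((Θ j).blocks 0).inp) x) =
          concatV u (fun j => ((Θ j).blocks ((Θ j).n - 1)).out)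
            (fun j => ResNet.realize a (Θ j) (x j))) ∧
    (ResNet.parallel u Θ).complexity ≤ u ^ 2 * (Θ 0).complexity := by
  have hdep : ∀ i < (Θ 0).n, ∀ j < u, ((Θ j).blocks i).depth = ((Θ 0).blocks i).depth :=
    fun i hi j hj => arch_depth_eq (harch j hj i hi)
  constructor
  · intro x
    set n := (Θ 0).n with hn
    set X := concatV u (fun j => ((Θ j).blocks 0).inp) x with hX
    set D : ℕ → ℕ → ℕ :=
      fun i j => if i = 0 then ((Θ j).blocks 0).inp else ((Θ j).blocks (i - 1)).out with hDdef
    have hinp : ∀ i < n, ∀ j < u, D i j = ((Θ j).blocks i).inp := by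
      intro i hi j hj
      cases i with
      | zero => rfl
      | succ k =>
        show ((Θ j).blocks k).out = ((Θ j).blocks (k + 1)).inp
        exact (hchain j hj k (by rw [hlen j hj]; exact hi)).symm
    have key : ∀ i, i ≤ n → ∀ r,
        ResNet.state a (ResNet.parallel u Θ) X i r
          = concatV u (D i) (fun j => ResNet.state a (Θ j) (x j) i) r := by
      intro i
      induction i with
      | zero => intro _ r; rfl
      | succ i ih =>
        intro hi r
        have hi' : i < n := hi
        set S : ℕ → ℕ → ℝ := fun j => ResNet.state a (Θ j) (x j) i with hS
        have hstate : ResNet.state a (ResNet.parallel u Θ) X i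
            = concatV u (fun t => ((Θ t).blocks i).inp) S := by
          funext s
          rw [ih (le_of_lt hi') s]
          exact congrFun (concatV_congr (fun t ht => hinp i hi' t ht) (fun m _ => rfl)) s
        have e1 : ResNet.state a (ResNet.parallel u Θ) X (i + 1) r
            = mulVecN (offset (fun t => ((Θ t).blocks i).inp) u) ((ResNet.parallel u Θ).Γ i)
                (concatV u (fun t => ((Θ t).blocks i).inp) S) r
              + FNN.realize a (FNN.parallel u (fun j => (Θ j).blocks i))
                (concatV u (fun t => ((Θ t).blocks i).inp) S) r := by
          rw [← hstate]; rfl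
        have hΓ : mulVecN (offset (fun t => ((Θ t).blocks i).inp) u)
              ((ResNet.parallel u Θ).Γ i) (concatV u (fun t => ((Θ t).blocks i).inp) S) r
            = concatV u (fun t => ((Θ t).blocks i).out)
                (fun m r' => ∑ s ∈ Finset.range (((Θ m).blocks i).inp),
                  (Θ m).Γ i r' s * S m s) r :=
          block_mulvec (fun t => ((Θ t).blocks i).out) (fun t => ((Θ t).blocks i).inp)
            (fun m => (Θ m).Γ i) S (concatV u (fun t => ((Θ t).blocks i).inp) S)
            (fun s _ => rfl) r
        have e2 : FNN.realize a (FNN.parallel u (fun j => (Θ j).blocks i))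
              (concatV u (fun t => ((Θ t).blocks i).inp) S)
            = concatV u (fun t => ((Θ t).blocks i).out)
                (fun j => FNN.realize a ((Θ j).blocks i) (S j)) :=
          parallel_realize a u (fun j => (Θ j).blocks i) (fun j hj => hdep i hi' j hj) S
        have e3 : concatV u (fun t => ((Θ t).blocks i).out)
              (fun m r' => ∑ s ∈ Finset.range (((Θ m).blocks i).inp),
                (Θ m).Γ i r' s * S m s) r
            + concatV u (fun t => ((Θ t).blocks i).out)
                (fun j => FNN.realize a ((Θ j).blocks i) (S j)) r
            = concatV u (D (i + 1)) (fun j => ResNet.state a (Θ j) (x j) (i + 1)) r := by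
          rw [concatV_add]; rfl
        rw [e1, hΓ, e2]
        exact e3
    funext r
    have h0 : ResNet.realize a (ResNet.parallel u Θ) X r
        = ResNet.state a (ResNet.parallel u Θ) X n r := rfl
    rw [h0, key n le_rfl r]
    refine congrFun (concatV_congr ?_ ?_) r
    · intro t ht
      rw [hlen t ht]
      show D n t = ((Θ t).blocks (n - 1)).out
      simp only [hDdef]
      rw [if_neg (by omega)]
    · intro m hm
      show ResNet.state a (Θ m) (x m) n = ResNet.realize a (Θ m) (x m)
      unfold ResNet.realize
      rw [hlen m hm]
  · have hblock : ∀ i < (Θ 0).n,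
        ((ResNet.parallel u Θ).blocks i).params
            + ((ResNet.parallel u Θ).blocks i).out * ((ResNet.parallel u Θ).blocks i).inp
          ≤ u ^ 2 * (((Θ 0).blocks i).params + ((Θ 0).blocks i).out * ((Θ 0).blocks i).inp) := by
      intro i hi
      set L := ((Θ 0).blocks i).depth with hL
      set d : ℕ → ℕ := ((Θ 0).blocks i).dims with hd
      have hdims : ∀ j < u, ∀ k ≤ L + 1, ((Θ j).blocks i).dims k = d k := by
        intro j hj k hk
        exact arch_dims_eq (harch j hj i hi) (by rw [hdep i hi j hj]; exact hk)
      have hsum : ∀ k ≤ L + 1, (∑ m ∈ Finset.range u, ((Θ m).blocks i).dims k) = u * d k := by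
        intro k hk
        rw [Finset.sum_congr rfl (fun m hm => hdims m (Finset.mem_range.1 hm) k hk)]
        simp [mul_comm]
      have hparams : ((ResNet.parallel u Θ).blocks i).params
          = ∑ k ∈ Finset.range (L + 1),
              (u * d (k + 1)) * (u * d k + 1) := by
        show (∑ k ∈ Finset.range (L + 1),
            (∑ m ∈ Finset.range u, ((Θ m).blocks i).dims (k + 1))
              * ((∑ m ∈ Finset.range u, ((Θ m).blocks i).dims k) + 1)) = _
        refine Finset.sum_congr rfl fun k hk => ?_
        have hk' := Finset.mem_range.1 hk
        rw [hsum (k + 1) (by omega), hsum k (by omega)]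
      have hio : ((ResNet.parallel u Θ).blocks i).out * ((ResNet.parallel u Θ).blocks i).inp
          = (u * d (L + 1)) * (u * d 0) := by
        show (∑ m ∈ Finset.range u, ((Θ m).blocks i).dims (L + 1))
            * (∑ m ∈ Finset.range u, ((Θ m).blocks i).dims 0) = _
        rw [hsum (L + 1) le_rfl, hsum 0 (by omega)]
      rw [hparams, hio]
      have hp0 : ((Θ 0).blocks i).params
          = ∑ k ∈ Finset.range (L + 1), d (k + 1) * (d k + 1) := rfl
      have hio0 : ((Θ 0).blocks i).out * ((Θ 0).blocks i).inp = d (L + 1) * d 0 := rfl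
      rw [hp0, hio0, Nat.mul_add, Finset.mul_sum]
      have h1 : (∑ k ∈ Finset.range (L + 1), (u * d (k + 1)) * (u * d k + 1))
          ≤ ∑ k ∈ Finset.range (L + 1), u ^ 2 * (d (k + 1) * (d k + 1)) := by
        refine Finset.sum_le_sum fun k _ => ?_
        calc (u * d (k + 1)) * (u * d k + 1)
            ≤ (u * d (k + 1)) * (u * (d k + 1)) :=
              Nat.mul_le_mul_left _ (by nlinarith [hu])
          _ = u ^ 2 * (d (k + 1) * (d k + 1)) := by ring
      have h2 : (u * d (L + 1)) * (u * d 0) = u ^ 2 * (d (L + 1) * d 0) := by ring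
      omega
    show (∑ i ∈ Finset.range (Θ 0).n,
        (((ResNet.parallel u Θ).blocks i).params
          + ((ResNet.parallel u Θ).blocks i).out * ((ResNet.parallel u Θ).blocks i).inp)) ≤ _
    calc (∑ i ∈ Finset.range (Θ 0).n,
          (((ResNet.parallel u Θ).blocks i).params
            + ((ResNet.parallel u Θ).blocks i).out * ((ResNet.parallel u Θ).blocks i).inp))
        ≤ ∑ i ∈ Finset.range (Θ 0).n,
            u ^ 2 * (((Θ 0).blocks i).params + ((Θ 0).blocks i).out * ((Θ 0).blocks i).inp) :=
          Finset.sum_le_sum fun i hi => hblock i (Finset.mem_range.1 hi)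
      _ = u ^ 2 * (Θ 0).complexity := by
          rw [ResNet.complexity, Finset.mul_sum]
end
end
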